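/- Orbit size comparison: Let μ_k be a partition of [n] with exactly one block of size k (k ≥ 2) whose other blocks all have size < k, and for ℓ < k let μ_ℓ be obtained from μ_k by splitting the k-block into one highlighted ℓ-block and k−ℓ singletons. Let M_{ℓ+1} and M_ℓ be the orbits of μ_{ℓ+1} and μ_ℓ (as highlighted partitions) under the symmetric group S_n. If μ_ℓ has at least c·n non-highlighted singletons (c > 0 constant) and all blocks have size O(1), then |M_{ℓ+1}| ≥ Ω(n)·|M_ℓ|. -/

import Mathlib

open scoped BigOperators Classical

/-- A highlighted partition of `[n]`: a family of blocks together with a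
distinguished block. -/
abbrev HPart (n : ℕ) := Finset (Finset (Fin n)) × Finset (Fin n)

/-- `s` is a partition of `[n]`: blocks are nonempty and every element lies in a
unique block. -/
def IsPartitionOf (n : ℕ) (s : Finset (Finset (Fin n))) : Prop :=
  (∀ b ∈ s, b.Nonempty) ∧ ∀ j : Fin n, ∃! b, b ∈ s ∧ j ∈ b

/-- Action of a permutation of `[n]` on a highlighted partition. -/
noncomputable def permAct {n : ℕ} (π : Equiv.Perm (Fin n)) (p : HPart n) : HPart n :=
  (p.1.image (Finset.image π), p.2.image π)

/-- The orbit of a highlighted partition under the symmetric group `S_n`. -/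
noncomputable def hOrbit {n : ℕ} (p : HPart n) : Finset (HPart n) :=
  Finset.univ.filter (fun p' => ∃ π : Equiv.Perm (Fin n), permAct π p = p')


/-!
Double counting. Call `p` a child of `q` when `p` arises from `q` by splitting some `x` off the
highlighted block; every `q` has at most `|q.2| = ℓ + 1` children. Conversely, merging a
non-highlighted singleton `{j}` of a partition `p` in the orbit of `μ₁` into its highlighted block
gives a parent of `p`, distinct singletons giving distinct parents. That parent lies in the orbit
of `μ₂`: after moving `p` back to `μ₁`, the transposition of `i` and `j` fixes `μ₁`, because
`{i}` and `{j}` are both singleton blocks of `μ₁`, and carries the merge of `{i}`, which is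
`μ₂`, to the merge of `{j}`.
-/

open scoped Pointwise
open Finset

variable {n : ℕ}

namespace IsPartitionOf

variable {s : Finset (Finset (Fin n))} {b c : Finset (Fin n)}

theorem eq_of_mem_of_mem (hs : IsPartitionOf n s) (hb : b ∈ s) (hc : c ∈ s) {j : Fin n}
    (hjb : j ∈ b) (hjc : j ∈ c) : b = c :=
  (hs.2 j).unique ⟨hb, hjb⟩ ⟨hc, hjc⟩

theorem disjoint (hs : IsPartitionOf n s) (hb : b ∈ s) (hc : c ∈ s) (hbc : b ≠ c) :
    Disjoint b c :=
  disjoint_left.2 fun _ hjb hjc => hbc (hs.eq_of_mem_of_mem hb hc hjb hjc)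

theorem eq_of_subset (hs : IsPartitionOf n s) (hb : b ∈ s) (hc : c ∈ s) (hbc : b ⊆ c) :
    b = c :=
  let ⟨_, hj⟩ := hs.1 b hb
  hs.eq_of_mem_of_mem hb hc hj (hbc hj)

theorem notMem_of_singleton_mem (hs : IsPartitionOf n s) (hb : b ∈ s) {y : Fin n}
    (hy : {y} ∈ s) (hby : b ≠ {y}) : y ∉ b :=
  fun h => hby (hs.eq_of_mem_of_mem hb hy h (mem_singleton_self y))

theorem of_pairwiseDisjoint (hne : ∀ b ∈ s, b.Nonempty) (hcover : ∀ j, ∃ b ∈ s, j ∈ b)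
    (hdisj : (s : Set (Finset (Fin n))).PairwiseDisjoint id) : IsPartitionOf n s := by
  refine ⟨hne, fun j => ?_⟩
  obtain ⟨b, hb, hjb⟩ := hcover j
  refine ⟨b, ⟨hb, hjb⟩, fun c ⟨hc, hjc⟩ => ?_⟩
  by_contra hcb
  exact disjoint_left.1 (hdisj hc hb hcb) hjc hjb

theorem pairwiseDisjoint (hs : IsPartitionOf n s) :
    (s : Set (Finset (Fin n))).PairwiseDisjoint id :=
  fun _ hb _ hc hbc => hs.disjoint hb hc hbc

theorem smul (hs : IsPartitionOf n s) (σ : Equiv.Perm (Fin n)) : IsPartitionOf n (σ • s) := by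
  refine ⟨?_, fun j => ?_⟩
  · simp only [mem_smul_finset]
    rintro _ ⟨b, hb, rfl⟩
    exact (hs.1 b hb).smul_finset
  · obtain ⟨b, ⟨hb, hjb⟩, hu⟩ := hs.2 (σ⁻¹ • j)
    refine ⟨σ • b, ⟨smul_mem_smul_finset hb, inv_smul_mem_iff.1 hjb⟩, ?_⟩
    rintro _ ⟨hσc, hjc⟩
    obtain ⟨c, hc, rfl⟩ := mem_smul_finset.1 hσc
    rw [hu c ⟨hc, inv_smul_mem_iff.2 hjc⟩]

theorem insert_insert_erase (hs : IsPartitionOf n s) (hb : b ∈ s) {b₁ b₂ : Finset (Fin n)}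
    (h₁ : b₁.Nonempty) (h₂ : b₂.Nonempty) (hd : Disjoint b₁ b₂) (hu : b₁ ∪ b₂ = b) :
    IsPartitionOf n (insert b₁ (insert b₂ (s.erase b))) := by
  refine of_pairwiseDisjoint ?_ (fun j => ?_) ?_
  · simp only [mem_insert, mem_erase]
    rintro c (rfl | rfl | ⟨-, hc⟩)
    exacts [h₁, h₂, hs.1 c hc]
  · obtain ⟨c, ⟨hc, hjc⟩, -⟩ := hs.2 j
    by_cases hcb : c = b
    · subst hcb
      rw [← hu, mem_union] at hjc
      rcases hjc with hj | hj
      exacts [⟨b₁, mem_insert_self _ _, hj⟩, ⟨b₂, mem_insert_of_mem (mem_insert_self _ _), hj⟩]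
    · exact ⟨c, mem_insert_of_mem (mem_insert_of_mem (mem_erase.2 ⟨hcb, hc⟩)), hjc⟩
  · have hsub : ∀ c ∈ (s : Set (Finset (Fin n))) \ {b}, Disjoint b₁ c ∧ Disjoint b₂ c :=
      fun c hc => disjoint_union_left.1 (hu ▸ hs.disjoint hb hc.1 (Ne.symm hc.2))
    simp only [coe_insert, coe_erase, Set.pairwiseDisjoint_insert, Set.mem_insert_iff, id]
    refine ⟨⟨hs.pairwiseDisjoint.subset Set.sdiff_subset, fun c hc _ => (hsub c hc).2⟩, ?_⟩
    rintro c (rfl | hc) -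
    exacts [hd, (hsub c hc).1]

end IsPartitionOf

def IsHighlightedPartition (p : HPart n) : Prop :=
  IsPartitionOf n p.1 ∧ p.2 ∈ p.1

def splitOff (q : HPart n) (x : Fin n) : HPart n :=
  (insert (q.2.erase x) (insert {x} (q.1.erase q.2)), q.2.erase x)

def mergeInto (p : HPart n) (b : Finset (Fin n)) : HPart n :=
  (insert (b ∪ p.2) (p.1 \ {b, p.2}), b ∪ p.2)

def nonHighlightedSingletons (p : HPart n) : Finset (Finset (Fin n)) :=
  p.1.filter fun b => b.card = 1 ∧ b ≠ p.2

theorem permAct_eq_smul (σ : Equiv.Perm (Fin n)) (p : HPart n) : permAct σ p = σ • p := rfl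

theorem mem_hOrbit {p q : HPart n} :
    q ∈ hOrbit p ↔ q ∈ MulAction.orbit (Equiv.Perm (Fin n)) p := by
  rw [hOrbit, mem_filter]
  simp only [mem_univ, true_and, permAct_eq_smul, MulAction.mem_orbit_iff]

variable {p q : HPart n} {x j : Fin n}

namespace IsHighlightedPartition

theorem smul (hp : IsHighlightedPartition p) (σ : Equiv.Perm (Fin n)) :
    IsHighlightedPartition (σ • p) :=
  ⟨hp.1.smul σ, smul_mem_smul_finset hp.2⟩

theorem splitOff (hq : IsHighlightedPartition q) (hx : x ∈ q.2) (hne : (q.2.erase x).Nonempty) :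
    IsHighlightedPartition (splitOff q x) := by
  refine ⟨hq.1.insert_insert_erase hq.2 hne (singleton_nonempty x) ?_ ?_, mem_insert_self _ _⟩
  · exact disjoint_singleton_right.2 (notMem_erase x _)
  · rw [union_comm, ← insert_eq, insert_erase hx]

end IsHighlightedPartition

theorem mergeInto_splitOff (hq : IsHighlightedPartition q) (hx : x ∈ q.2) :
    mergeInto (splitOff q x) {x} = q := by
  have h2 : {x} ∪ q.2.erase x = q.2 := by rw [← insert_eq, insert_erase hx]
  have hnot : ∀ c ⊆ q.2, c ∉ q.1.erase q.2 := fun c hc h =>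
    ne_of_mem_erase h (hq.1.eq_of_subset (mem_of_mem_erase h) hq.2 hc)
  have hx' := hnot {x} (singleton_subset_iff.2 hx)
  have he := hnot _ (erase_subset x q.2)
  refine Prod.ext ?_ h2
  simp only [mergeInto, splitOff, h2]
  ext c
  simp only [mem_insert, mem_sdiff, mem_erase]
  grind [hq.2]

theorem splitOff_mergeInto (hp : IsHighlightedPartition p) (hj : {j} ∈ p.1.erase p.2) :
    splitOff (mergeInto p {j}) j = p := by
  have hjp := hp.1.notMem_of_singleton_mem hp.2 (mem_of_mem_erase hj) (ne_of_mem_erase hj).symm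
  have h2 : ({j} ∪ p.2).erase j = p.2 := by rw [← insert_eq, erase_insert hjp]
  have hU : {j} ∪ p.2 ∉ p.1 := fun h => hjp <|
    (hp.1.eq_of_subset hp.2 h subset_union_right).symm ▸ mem_union_left _ (mem_singleton_self j)
  refine Prod.ext ?_ h2
  simp only [mergeInto, splitOff, h2]
  ext c
  simp only [mem_insert, mem_sdiff, mem_erase]
  grind [hp.2, mem_of_mem_erase hj, ne_of_mem_erase hj]

theorem smul_mergeInto (σ : Equiv.Perm (Fin n)) (p : HPart n) (b : Finset (Fin n)) :
    σ • mergeInto p b = mergeInto (σ • p) (σ • b) := by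
  simp [mergeInto, smul_finset_insert, smul_finset_union, smul_finset_sdiff, smul_finset_singleton]

theorem mergeInto_injOn (hp : IsHighlightedPartition p) :
    Set.InjOn (mergeInto p) (p.1.erase p.2) := by
  intro b hb c hc hbc
  have hdisj : ∀ d ∈ p.1.erase p.2, (d ∪ p.2) \ p.2 = d := fun d hd =>
    union_sdiff_cancel_right (hp.1.disjoint (mem_of_mem_erase hd) hp.2 (ne_of_mem_erase hd))
  rw [← hdisj b hb, ← hdisj c hc]
  exact congrArg (· \ p.2) (congrArg Prod.snd hbc)

theorem nonHighlightedSingletons_smul (σ : Equiv.Perm (Fin n)) (p : HPart n) :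
    nonHighlightedSingletons (σ • p) = σ • nonHighlightedSingletons p := by
  ext c
  simp [nonHighlightedSingletons, ← inv_smul_mem_iff, inv_smul_eq_iff]

theorem nonHighlightedSingletons_subset : nonHighlightedSingletons p ⊆ p.1.erase p.2 :=
  fun _ hb => mem_erase.2 ⟨(mem_filter.1 hb).2.2, (mem_filter.1 hb).1⟩

theorem swap_smul_eq_self (hp : IsHighlightedPartition p) {a b : Fin n}
    (ha : {a} ∈ p.1.erase p.2) (hb : {b} ∈ p.1.erase p.2) : Equiv.swap a b • p = p := by
  have hfix : ∀ c ∈ p.1, c ≠ {a} → c ≠ {b} → Equiv.swap a b • c = c := by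
    intro c hc hca hcb
    calc Equiv.swap a b • c = c.image id := image_congr fun y hy =>
          Equiv.swap_apply_of_ne_of_ne
            (ne_of_mem_of_not_mem hy (hp.1.notMem_of_singleton_mem hc (mem_of_mem_erase ha) hca))
            (ne_of_mem_of_not_mem hy (hp.1.notMem_of_singleton_mem hc (mem_of_mem_erase hb) hcb))
      _ = c := image_id
  refine Prod.ext (eq_of_subset_of_card_le (fun c hc => ?_) (card_smul_finset _ _).ge) ?_
  · obtain ⟨d, hd, rfl⟩ := mem_smul_finset.1 hc
    by_cases hda : d = {a}
    · simpa [hda, smul_finset_singleton] using mem_of_mem_erase hb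
    by_cases hdb : d = {b}
    · simpa [hdb, smul_finset_singleton] using mem_of_mem_erase ha
    rwa [hfix d hd hda hdb]
  · exact hfix p.2 hp.2 (ne_of_mem_erase ha).symm (ne_of_mem_erase hb).symm

theorem mergeInto_mem_hOrbit (hq : IsHighlightedPartition q) (hx : x ∈ q.2)
    (hne : (q.2.erase x).Nonempty) (hp : p ∈ hOrbit (splitOff q x)) {b : Finset (Fin n)}
    (hb : b ∈ nonHighlightedSingletons p) : mergeInto p b ∈ hOrbit q := by
  have hμ := hq.splitOff hx hne
  obtain ⟨σ, rfl⟩ := mem_hOrbit.1 hp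
  rw [nonHighlightedSingletons_smul] at hb
  obtain ⟨_, hj, rfl⟩ := mem_smul_finset.1 hb
  obtain ⟨j, rfl⟩ := card_eq_one.1 (mem_filter.1 hj).2.1
  have hxμ : {x} ∈ (splitOff q x).1.erase (splitOff q x).2 :=
    mem_erase.2 ⟨fun h => notMem_erase x q.2 ((show {x} = q.2.erase x from h) ▸
      mem_singleton_self x), mem_insert_of_mem (mem_insert_self _ _)⟩
  refine mem_hOrbit.2 ⟨σ * Equiv.swap x j, ?_⟩
  calc (σ * Equiv.swap x j) • q
      = σ • mergeInto (Equiv.swap x j • splitOff q x) (Equiv.swap x j • {x}) := by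
        rw [← smul_mergeInto, mergeInto_splitOff hq hx, mul_smul]
    _ = mergeInto (σ • splitOff q x) (σ • {j}) := by
        rw [swap_smul_eq_self hμ hxμ (nonHighlightedSingletons_subset hj), smul_finset_singleton,
          Equiv.Perm.smul_def, Equiv.swap_apply_left, smul_mergeInto]

theorem card_hOrbit_splitOff_mul_le (hq : IsHighlightedPartition q) (hx : x ∈ q.2)
    (hne : (q.2.erase x).Nonempty) :
    #(hOrbit (splitOff q x)) * #(nonHighlightedSingletons (splitOff q x)) ≤
      #(hOrbit q) * #q.2 := by
  refine card_mul_le_card_mul (fun p q' => ∃ y ∈ q'.2, splitOff q' y = p)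
    (fun p hp => ?_) (fun q' hq' => ?_)
  · obtain ⟨σ, rfl⟩ := mem_hOrbit.1 hp
    have hp' := (hq.splitOff hx hne).smul σ
    set p := σ • splitOff q x
    calc #(nonHighlightedSingletons (splitOff q x))
        = #((nonHighlightedSingletons p).image (mergeInto p)) := by
          rw [card_image_of_injOn ((mergeInto_injOn hp').mono nonHighlightedSingletons_subset),
            nonHighlightedSingletons_smul, card_smul_finset]
      _ ≤ _ := card_le_card fun q' hq' => ?_
    obtain ⟨b, hb, rfl⟩ := mem_image.1 hq'
    obtain ⟨j, rfl⟩ := card_eq_one.1 (mem_filter.1 hb).2.1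
    exact (mem_bipartiteAbove _).2 ⟨mergeInto_mem_hOrbit hq hx hne hp hb, j,
      mem_union_left _ (mem_singleton_self j),
      splitOff_mergeInto hp' (nonHighlightedSingletons_subset hb)⟩
  · obtain ⟨σ, rfl⟩ := mem_hOrbit.1 hq'
    calc _ ≤ #((σ • q).2.image (splitOff (σ • q))) := card_le_card fun p hp => by
          obtain ⟨-, y, hy, rfl⟩ := (mem_bipartiteBelow _).1 hp
          exact mem_image_of_mem _ hy
      _ ≤ #(σ • q).2 := card_image_le
      _ = #q.2 := card_smul_finset σ q.2

theorem stmt_15_general (n ℓ : ℕ) (c : ℝ)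
    (hℓ : 1 ≤ ℓ)
    (μ₂ μ₁ : HPart n)
    (hpart2 : IsPartitionOf n μ₂.1) (hmem2 : μ₂.2 ∈ μ₂.1)
    (i : Fin n) (hi : i ∈ μ₂.2)
    (hsplit1 : μ₁.1 = insert (μ₂.2.erase i) (insert {i} (μ₂.1.erase μ₂.2)))
    (hsplit2 : μ₁.2 = μ₂.2.erase i)
    (hcard : μ₁.2.card = ℓ)
    (hsing : c * n ≤ ((μ₁.1.filter (fun b => b.card = 1 ∧ b ≠ μ₁.2)).card : ℝ)) :
    (c * n / (ℓ + 1)) * ((hOrbit μ₁).card : ℝ) ≤ ((hOrbit μ₂).card : ℝ) := by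
  have hμ₁ : μ₁ = splitOff μ₂ i := Prod.ext hsplit1 hsplit2
  have hne : (μ₂.2.erase i).Nonempty := by rw [← hsplit2, ← card_pos, hcard]; omega
  have hcard₂ : #μ₂.2 = ℓ + 1 := by rw [← card_erase_add_one hi, ← hsplit2, hcard]
  have key := card_hOrbit_splitOff_mul_le ⟨hpart2, hmem2⟩ hi hne
  rw [← hμ₁, hcard₂] at key
  have hsing' : c * n ≤ #(nonHighlightedSingletons μ₁) := hsing
  rw [div_mul_eq_mul_div, div_le_iff₀ (by positivity)]
  calc c * n * #(hOrbit μ₁) ≤ #(nonHighlightedSingletons μ₁) * #(hOrbit μ₁) := by gcongr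
    _ ≤ #(hOrbit μ₂) * (ℓ + 1) := by rw [mul_comm]; exact_mod_cast key

/-- Orbit size comparison: if the highlighted partition `μ₁` (with highlighted
`ℓ`-block) is obtained from the highlighted partition `μ₂` by splitting off an
element `i` of the highlighted block of `μ₂`, if `μ₁` has at least `c·n`
non-highlighted singletons, and all blocks of `μ₂` have size at most `D = O(1)`,
then `|M_{ℓ+1}| ≥ Ω(n)·|M_ℓ|`, concretely
`|hOrbit μ₂| ≥ (c·n/(ℓ+1))·|hOrbit μ₁|`. -/
theorem stmt_15 (n k ℓ D : ℕ) (c : ℝ) (hc : 0 < c) (hn : 0 < n)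
    (hℓ : 1 ≤ ℓ) (hℓk : ℓ + 1 ≤ k) (hk : 2 ≤ k)
    (μ₂ μ₁ : HPart n)
    (hpart2 : IsPartitionOf n μ₂.1) (hmem2 : μ₂.2 ∈ μ₂.1)
    (i : Fin n) (hi : i ∈ μ₂.2)
    (hsplit1 : μ₁.1 = insert (μ₂.2.erase i) (insert {i} (μ₂.1.erase μ₂.2)))
    (hsplit2 : μ₁.2 = μ₂.2.erase i)
    (hcard : μ₁.2.card = ℓ)
    (hD : ∀ b ∈ μ₂.1, b.card ≤ D)
    (hsing : c * n ≤ ((μ₁.1.filter (fun b => b.card = 1 ∧ b ≠ μ₁.2)).card : ℝ)) :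
    (c * n / (ℓ + 1)) * ((hOrbit μ₁).card : ℝ) ≤ ((hOrbit μ₂).card : ℝ) :=
  stmt_15_general n ℓ c hℓ μ₂ μ₁ hpart2 hmem2 i hi hsplit1 hsplit2 hcard hsing
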